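/- Let V be a real Banach space, A : V → V* strongly monotone with constant m_A, M : V → X a bounded linear operator into a Hilbert space X, and suppose the multivalued term satisfies a growth bound ‖∂j(Mu, Mu)‖_X ≤ d₁ + (d₂+d₃)‖Mu‖_X with (d₂+d₃)‖M‖² < m_A. If u satisfies ⟨Au - f, -u⟩ + ⟨w, -Mu⟩_X + φ(0) - φ(u) ≥ 0 with ‖w‖_X ≤ d₁ + (d₂+d₃)‖Mu‖_X, φ(0)=0, φ ≥ -c_φ‖u‖ (Lipschitz), then ‖u‖ ≤ (‖f - A0‖ + c_φ + d₁‖M‖)/(m_A - (d₂+d₃)‖M‖²). -/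

import Mathlib

/-! Testing strong monotonicity of `A` between `u` and `0` gives
`m_A ‖u‖² ≤ ⟨Au - f, u⟩ + ⟨f - A0, u⟩`. The inequality for `u` bounds `⟨Au - f, u⟩` by
`-⟨w, Mu⟩ + φ 0 - φ u`, and the growth bound on `w` together with `‖Mu‖ ≤ ‖M‖ ‖u‖` and the
Lipschitz bound on `φ` turn this into `(m_A - (d₂ + d₃)‖M‖²) ‖u‖² ≤ K ‖u‖`; the smallness
condition lets one divide. -/

lemma le_div_of_mul_sq_le_mul {a b x : ℝ} (ha : 0 < a) (hb : 0 ≤ b) (hx : 0 ≤ x)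
    (h : a * x ^ 2 ≤ b * x) : x ≤ b / a := by
  rw [le_div_iff₀ ha]
  rcases hx.eq_or_lt with rfl | hx
  · simpa using hb
  · nlinarith

lemma neg_inner_le_of_norm_le_affine {E X : Type*} [SeminormedAddCommGroup E]
    [NormedSpace ℝ E] [NormedAddCommGroup X] [InnerProductSpace ℝ X]
    (M : E →L[ℝ] X) (u : E) (w : X) {d c : ℝ} (hd : 0 ≤ d) (hc : 0 ≤ c)
    (hw : ‖w‖ ≤ d + c * ‖M u‖) :
    -inner ℝ w (M u) ≤ d * (‖M‖ * ‖u‖) + c * (‖M‖ * ‖u‖) ^ 2 := by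
  have hMu : ‖M u‖ ≤ ‖M‖ * ‖u‖ := M.le_opNorm u
  calc -inner ℝ w (M u) ≤ ‖w‖ * ‖M u‖ := (neg_le_abs _).trans (abs_real_inner_le_norm w (M u))
    _ ≤ (d + c * ‖M u‖) * ‖M u‖ := by gcongr
    _ = d * ‖M u‖ + c * ‖M u‖ ^ 2 := by ring
    _ ≤ d * (‖M‖ * ‖u‖) + c * (‖M‖ * ‖u‖) ^ 2 := by gcongr

theorem auxiliary_inequality_bound_general
    {V X : Type*} [NormedAddCommGroup V] [NormedSpace ℝ V]
    [NormedAddCommGroup X] [InnerProductSpace ℝ X]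
    (A : V → (V →L[ℝ] ℝ)) (mA : ℝ)
    (hmono : ∀ v₁ v₂ : V, mA * ‖v₁ - v₂‖ ^ 2 ≤ (A v₁ - A v₂) (v₁ - v₂))
    (M : V →L[ℝ] X)
    (d₁ d₂ d₃ : ℝ) (hd₁ : 0 ≤ d₁) (hd₂ : 0 ≤ d₂) (hd₃ : 0 ≤ d₃)
    (hsmall : (d₂ + d₃) * ‖M‖ ^ 2 < mA)
    (φ : V → ℝ) (cφ : ℝ) (hcφ : 0 ≤ cφ)
    (hφ : ∀ v₁ v₂ : V, φ v₁ - φ v₂ ≤ cφ * ‖v₁ - v₂‖)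
    (f : V →L[ℝ] ℝ) (u : V) (w : X)
    (hwbound : ‖w‖ ≤ d₁ + (d₂ + d₃) * ‖M u‖)
    (hineq : 0 ≤ (A u - f) (-u) + inner ℝ w (-(M u)) + φ 0 - φ u) :
    ‖u‖ ≤ (‖f - A 0‖ + cφ + d₁ * ‖M‖) / (mA - (d₂ + d₃) * ‖M‖ ^ 2) := by
  have hcoercive : mA * ‖u‖ ^ 2 ≤ (A u - f) u + (f - A 0) u := by
    simpa using hmono u 0
  have hdual : (f - A 0) u ≤ ‖f - A 0‖ * ‖u‖ :=
    (Real.le_norm_self _).trans ((f - A 0).le_opNorm u)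
  have hφu : φ 0 - φ u ≤ cφ * ‖u‖ := by simpa using hφ 0 u
  have hinner := neg_inner_le_of_norm_le_affine M u w hd₁ (add_nonneg hd₂ hd₃) hwbound
  simp only [map_neg, inner_neg_right] at hineq
  refine le_div_of_mul_sq_le_mul (sub_pos.2 hsmall) (by positivity) (norm_nonneg u) ?_
  linarith

/-- A priori bound for the auxiliary inequality with multivalued term:
    ‖u‖ ≤ (‖f - A0‖ + c_φ + d₁‖M‖)/(m_A - (d₂+d₃)‖M‖²). -/
theorem auxiliary_inequality_bound
    {V X : Type*} [NormedAddCommGroup V] [NormedSpace ℝ V] [CompleteSpace V]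
    [NormedAddCommGroup X] [InnerProductSpace ℝ X]
    (A : V → (V →L[ℝ] ℝ)) (mA : ℝ) (hmA : 0 < mA)
    (hmono : ∀ v₁ v₂ : V, mA * ‖v₁ - v₂‖ ^ 2 ≤ (A v₁ - A v₂) (v₁ - v₂))
    (M : V →L[ℝ] X)
    (d₁ d₂ d₃ : ℝ) (hd₁ : 0 ≤ d₁) (hd₂ : 0 ≤ d₂) (hd₃ : 0 ≤ d₃)
    (hsmall : (d₂ + d₃) * ‖M‖ ^ 2 < mA)
    (φ : V → ℝ) (cφ : ℝ) (hcφ : 0 ≤ cφ)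
    (hφ : ∀ v₁ v₂ : V, φ v₁ - φ v₂ ≤ cφ * ‖v₁ - v₂‖) (hφ0 : φ 0 = 0)
    (f : V →L[ℝ] ℝ) (u : V) (w : X)
    (hwbound : ‖w‖ ≤ d₁ + (d₂ + d₃) * ‖M u‖)
    (hineq : 0 ≤ (A u - f) (-u) + inner ℝ w (-(M u)) + φ 0 - φ u) :
    ‖u‖ ≤ (‖f - A 0‖ + cφ + d₁ * ‖M‖) / (mA - (d₂ + d₃) * ‖M‖ ^ 2) :=
  auxiliary_inequality_bound_general A mA hmono M d₁ d₂ d₃ hd₁ hd₂ hd₃ hsmall φ cφ hcφ hφ f u w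
    hwbound hineq
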